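/- arXiv:2207.09125 — 5 statements merged into one kernel-verified Lean document; each statement's English description precedes it below -/
import Mathlib

section
/- Let s, q ∈ ℍ with s ∉ [q] (equivalently, the quaternion Q_{c,s}(q) = s² − 2Re(q)s + |q|² is nonzero). Then the partial derivative along the real direction of the left slice hyperholomorphic Cauchy kernel satisfies: ∂_{q₀} S_L^{-1}(s,q) = −Q_{c,s}(q)^{-1} + (q₀/2) F_L(s,q) − (1/2) F_L(s,q) s. -/
noncomputable section

open scoped Quaternion
open Finset

/-- The imaginary units `e₁, e₂, e₃` of the quaternions `ℍ = ℍ[ℝ]`. -/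
def e1 : ℍ[ℝ] := ⟨0, 1, 0, 0⟩
def e2 : ℍ[ℝ] := ⟨0, 0, 1, 0⟩
def e3 : ℍ[ℝ] := ⟨0, 0, 0, 1⟩

/-- The (left) Fueter operator `Df = ∂_{q₀}f + e₁∂_{q₁}f + e₂∂_{q₂}f + e₃∂_{q₃}f`,
where the partial derivatives are the directional derivatives along `1, e₁, e₂, e₃`. -/
def Dop (f : ℍ[ℝ] → ℍ[ℝ]) (q : ℍ[ℝ]) : ℍ[ℝ] :=
  fderiv ℝ f q 1 + e1 * fderiv ℝ f q e1 + e2 * fderiv ℝ f q e2 + e3 * fderiv ℝ f q e3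

/-- The (left) conjugate Fueter operator
`D̄f = ∂_{q₀}f − e₁∂_{q₁}f − e₂∂_{q₂}f − e₃∂_{q₃}f`. -/
def Dbar (f : ℍ[ℝ] → ℍ[ℝ]) (q : ℍ[ℝ]) : ℍ[ℝ] :=
  fderiv ℝ f q 1 - e1 * fderiv ℝ f q e1 - e2 * fderiv ℝ f q e2 - e3 * fderiv ℝ f q e3

/-- The right Fueter operator `fD = ∂_{q₀}f + (∂_{q₁}f)e₁ + (∂_{q₂}f)e₂ + (∂_{q₃}f)e₃`. -/
def DopR (f : ℍ[ℝ] → ℍ[ℝ]) (q : ℍ[ℝ]) : ℍ[ℝ] :=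
  fderiv ℝ f q 1 + fderiv ℝ f q e1 * e1 + fderiv ℝ f q e2 * e2 + fderiv ℝ f q e3 * e3

/-- The right conjugate Fueter operator
`fD̄ = ∂_{q₀}f − (∂_{q₁}f)e₁ − (∂_{q₂}f)e₂ − (∂_{q₃}f)e₃`. -/
def DbarR (f : ℍ[ℝ] → ℍ[ℝ]) (q : ℍ[ℝ]) : ℍ[ℝ] :=
  fderiv ℝ f q 1 - fderiv ℝ f q e1 * e1 - fderiv ℝ f q e2 * e2 - fderiv ℝ f q e3 * e3

/-- The Laplacian in the four real variables `q₀, q₁, q₂, q₃`. -/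
def Lap (f : ℍ[ℝ] → ℍ[ℝ]) (q : ℍ[ℝ]) : ℍ[ℝ] :=
  fderiv ℝ (fun p => fderiv ℝ f p 1) q 1 + fderiv ℝ (fun p => fderiv ℝ f p e1) q e1 +
    fderiv ℝ (fun p => fderiv ℝ f p e2) q e2 + fderiv ℝ (fun p => fderiv ℝ f p e3) q e3

/-- `s ∈ [q]`: membership in the 2-sphere
`[q] = {p : Re(p) = Re(q), |Im(p)| = |Im(q)|}` of `q`. -/
def inSphereOf (s q : ℍ[ℝ]) : Prop := s.re = q.re ∧ ‖s.im‖ = ‖q.im‖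

/-- `Q_{c,s}(q) = s² − 2 Re(q) s + |q|²`. -/
def Qc (s q : ℍ[ℝ]) : ℍ[ℝ] := s ^ 2 - 2 * (q.re : ℍ[ℝ]) * s + ((‖q‖ ^ 2 : ℝ) : ℍ[ℝ])

/-- The left slice hyperholomorphic Cauchy kernel `S_L^{-1}(s,q) = (s − q̄) Q_{c,s}(q)⁻¹`. -/
def SL (s q : ℍ[ℝ]) : ℍ[ℝ] := (s - star q) * (Qc s q)⁻¹

/-- The right slice hyperholomorphic Cauchy kernel `S_R^{-1}(s,q) = Q_{c,s}(q)⁻¹ (s − q̄)`. -/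
def SR (s q : ℍ[ℝ]) : ℍ[ℝ] := (Qc s q)⁻¹ * (s - star q)

/-- The left `F`-kernel `F_L(s,q) = −4 (s − q̄) Q_{c,s}(q)^{-2}`. -/
def FL (s q : ℍ[ℝ]) : ℍ[ℝ] := -4 * (s - star q) * ((Qc s q)⁻¹) ^ 2

/-- The right `F`-kernel `F_R(s,q) = −4 Q_{c,s}(q)^{-2} (s − q̄)`. -/
def FR (s q : ℍ[ℝ]) : ℍ[ℝ] := -4 * ((Qc s q)⁻¹) ^ 2 * (s - star q)

/-- The Clifford–Appell polynomials
`Q_ℓ(q,q̄) = (2/((ℓ+1)(ℓ+2))) Σ_{j=0}^{ℓ} (ℓ−j+1) q^{ℓ−j} q̄^j`. -/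
def QA (ℓ : ℕ) (q : ℍ[ℝ]) : ℍ[ℝ] :=
  ((2 : ℝ) / ((ℓ + 1) * (ℓ + 2))) •
    ∑ j ∈ Finset.range (ℓ + 1), ((ℓ - j + 1 : ℕ) : ℍ[ℝ]) * q ^ (ℓ - j) * (star q) ^ j

/-!
Along the real direction the conjugate moves with `q`, `star (q + t) = star q + t`, and
`Q_{c,s}(q + t) = Q_{c,s}(q) + 2t(q₀ - s) + t²`, so the product rule and the derivative
`h ↦ -Q⁻¹ h Q⁻¹` of inversion give `∂_{q₀} S_L^{-1} = -Q⁻¹ - 2 (s - q̄) Q⁻¹ (q₀ - s) Q⁻¹`.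
Since `Q_{c,s}(q)` is a real polynomial in `s`, it commutes with `s`; moving `s` to the right
turns the second term into `(q₀/2) F_L - (1/2) F_L s`.
-/

open Quaternion

instance Quaternion.instStarModule {R : Type*} [CommRing R] [StarRing R] [TrivialStar R] :
    StarModule R ℍ[R] :=
  ⟨fun r a => by rw [Quaternion.star_smul, star_trivial r]⟩

lemma Quaternion.sq_norm_eq_sum_sq (a : ℍ[ℝ]) :
    ‖a‖ ^ 2 = a.re ^ 2 + a.imI ^ 2 + a.imJ ^ 2 + a.imK ^ 2 := by
  rw [sq, ← normSq_eq_norm_mul_self, normSq_def']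

lemma Qc_eq_smul (s q : ℍ[ℝ]) : Qc s q = s ^ 2 - (2 * q.re) • s + (‖q‖ ^ 2) • 1 := by
  simp only [Qc, ← coe_mul_eq_smul, mul_one]
  push_cast
  rfl

lemma re_Qc (s q : ℍ[ℝ]) :
    (Qc s q).re = (s.re - q.re) ^ 2 + ‖q.im‖ ^ 2 - ‖s.im‖ ^ 2 := by
  simp only [Qc_eq_smul, Quaternion.sq_norm_eq_sum_sq]
  simp [sq]
  ring

lemma im_Qc (s q : ℍ[ℝ]) : (Qc s q).im = (2 * (s.re - q.re)) • s.im := by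
  ext <;> simp [Qc_eq_smul, sq] <;> ring

lemma Qc_ne_zero_of_not_inSphereOf {s q : ℍ[ℝ]} (h : ¬ inSphereOf s q) : Qc s q ≠ 0 := by
  contrapose! h
  have hre : (s.re - q.re) ^ 2 + ‖q.im‖ ^ 2 - ‖s.im‖ ^ 2 = 0 := by rw [← re_Qc, h]; rfl
  have him : (2 * (s.re - q.re)) • s.im = 0 := by rw [← im_Qc, h]; rfl
  rcases smul_eq_zero.1 him with hs | hs
  · have hs : s.re = q.re := by linarith
    refine ⟨hs, ((sq_eq_sq₀ (norm_nonneg _) (norm_nonneg _)).1 ?_)⟩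
    rw [hs, sub_self] at hre
    linarith
  · have hre' : (s.re - q.re) ^ 2 + ‖q.im‖ ^ 2 = 0 := by simpa [hs] using hre
    obtain ⟨hre0, hq0⟩ := (add_eq_zero_iff_of_nonneg (sq_nonneg _) (sq_nonneg _)).1 hre'
    exact ⟨sub_eq_zero.1 (pow_eq_zero_iff two_ne_zero |>.1 hre0),
      by rw [hs, norm_zero, pow_eq_zero_iff two_ne_zero |>.1 hq0]⟩

lemma commute_Qc_self (s q : ℍ[ℝ]) : Commute (Qc s q) s := by
  rw [Qc_eq_smul]
  exact (((Commute.self_pow s 2).symm.sub_left ((Commute.refl s).smul_left _)).add_left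
    ((Commute.one_left s).smul_left _))

lemma Qc_add_smul_one (s q : ℍ[ℝ]) (t : ℝ) :
    Qc s (q + t • 1) = Qc s q + (2 * t) • ((q.re : ℍ[ℝ]) - s) + t ^ 2 • 1 := by
  simp only [Qc_eq_smul, Quaternion.sq_norm_eq_sum_sq]
  ext <;> simp [sq] <;> ring

lemma Qc_eq_mul_star (s q : ℍ[ℝ]) : Qc s q = s ^ 2 - (q + star q) * s + q * star q := by
  rw [Qc, self_add_star, self_mul_star, normSq_eq_norm_mul_self, sq ‖q‖]

lemma differentiableAt_SL {s q : ℍ[ℝ]} (h : Qc s q ≠ 0) : DifferentiableAt ℝ (SL s) q := by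
  have hQc : Differentiable ℝ (Qc s) := by
    rw [funext (Qc_eq_mul_star s)]
    fun_prop
  unfold SL
  fun_prop (disch := exact h)

lemma hasLineDerivAt_SL_one {s q : ℍ[ℝ]} (h : Qc s q ≠ 0) :
    HasLineDerivAt ℝ (SL s)
      (-(Qc s q)⁻¹ - (s - star q) * ((Qc s q)⁻¹ * ((2 : ℝ) • ((q.re : ℍ[ℝ]) - s)) * (Qc s q)⁻¹))
      q 1 := by
  have hnum : HasDerivAt (fun t : ℝ => s - star (q + t • 1)) (-1) 0 := by
    simp only [star_add, Quaternion.star_smul, star_one, sub_add_eq_sub_sub]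
    simpa using ((hasDerivAt_id (0 : ℝ)).smul_const (1 : ℍ[ℝ])).const_sub (s - star q)
  have hden : HasDerivAt (fun t : ℝ => Qc s (q + t • 1)) ((2 : ℝ) • ((q.re : ℍ[ℝ]) - s)) 0 := by
    simp only [Qc_add_smul_one, add_assoc]
    simpa using ((((hasDerivAt_id (0 : ℝ)).const_mul 2).smul_const ((q.re : ℍ[ℝ]) - s)).add
      ((hasDerivAt_pow 2 (0 : ℝ)).smul_const (1 : ℍ[ℝ]))).const_add (Qc s q)
  have hinv := (hasFDerivAt_inv' (𝕜 := ℝ) (by simpa using h)).comp_hasDerivAt (0 : ℝ) hden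
  refine (hnum.fun_mul hinv).congr_deriv ?_
  simp only [zero_smul, add_zero, neg_one_mul, Function.comp_apply, neg_apply,
    ContinuousLinearMap.mulLeftRight_apply, mul_neg, sub_eq_add_neg]

lemma FL_eq_smul (s q : ℍ[ℝ]) : FL s q = (-4 : ℝ) • ((s - star q) * (Qc s q)⁻¹ ^ 2) := by
  rw [FL, mul_assoc, ← coe_mul_eq_smul]
  push_cast
  rfl

/-- for `s ∉ [q]`,
`∂_{q₀} S_L^{-1}(s,q) = −Q_{c,s}(q)⁻¹ + (q₀/2) F_L(s,q) − (1/2) F_L(s,q) s`. -/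
theorem dq0_SL (s q : ℍ[ℝ]) (h : ¬ inSphereOf s q) :
    fderiv ℝ (fun p => SL s p) q 1 =
      -(Qc s q)⁻¹ + (q.re / 2) • FL s q - (1 / 2 : ℝ) • (FL s q * s) := by
  have hQ := Qc_ne_zero_of_not_inSphereOf h
  rw [← (differentiableAt_SL hQ).lineDeriv_eq_fderiv, (hasLineDerivAt_SL_one hQ).lineDeriv,
    FL_eq_smul]
  have hBs : Commute (Qc s q)⁻¹ s := (commute_Qc_self s q).inv_left₀
  have hsandwich : (Qc s q)⁻¹ * ((q.re : ℍ[ℝ]) - s) * (Qc s q)⁻¹ =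
      q.re • (Qc s q)⁻¹ ^ 2 - (Qc s q)⁻¹ ^ 2 * s := by
    rw [mul_sub, sub_mul, mul_coe_eq_smul, smul_mul_assoc, mul_assoc _ s, ← hBs.eq, ← mul_assoc, sq]
  rw [mul_smul_comm, smul_mul_assoc, hsandwich]
  simp only [mul_sub, mul_smul_comm, smul_mul_assoc, mul_assoc]
  module
end
end

section
/- Let s, q ∈ ℍ with s ∉ [q]. Then the left F-kernel satisfies the equation F_L(s,q) s − q F_L(s,q) = −4 Q_{c,s}(q)^{-1}. -/
noncomputable section

open scoped Quaternion
open Finset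

/-! Since `Q_{c,s}(q)` is a polynomial in `s` with real coefficients, it commutes with `s`, so
`F_L s − q F_L = −4 ((s − q̄) s − q (s − q̄)) Q_{c,s}(q)⁻²`; and since `q + q̄ = 2 Re q` and
`q q̄ = |q|²` are real, the bracket is `Q_{c,s}(q)` itself. Where `Q_{c,s}(q) = 0` both sides
are `0`, as `0⁻¹ = 0`. -/

theorem commute_Qc (s q : ℍ[ℝ]) : Commute s (Qc s q) :=
  (((Commute.refl s).pow_right 2).sub_right
    (((Commute.ofNat_right s 2).mul_right (Quaternion.coe_commute _ s).symm).mul_right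
      (Commute.refl s))).add_right (Quaternion.coe_commute _ s).symm

theorem sub_star_mul_sub_mul_sub_star_eq_Qc (s q : ℍ[ℝ]) :
    (s - star q) * s - q * (s - star q) = Qc s q := by
  have h_add : q + star q = 2 * (q.re : ℍ[ℝ]) := q.self_add_star
  have h_mul : q * star q = ((‖q‖ ^ 2 : ℝ) : ℍ[ℝ]) := by
    rw [Quaternion.self_mul_star, Quaternion.normSq_eq_norm_mul_self, sq]
  calc (s - star q) * s - q * (s - star q) = s ^ 2 - (q + star q) * s + q * star q := by
        noncomm_ring
    _ = Qc s q := by rw [h_add, h_mul, Qc]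

theorem mul_inv_sq {G₀ : Type*} [GroupWithZero G₀] (a : G₀) : a * a⁻¹ ^ 2 = a⁻¹ := by
  by_cases ha : a = 0
  · simp [ha]
  · rw [sq, mul_inv_cancel_left₀ ha]

theorem FL_s_sub_q_FL_general (s q : ℍ[ℝ]) :
    FL s q * s - q * FL s q = -4 * (Qc s q)⁻¹ := by
  have hc : Commute s ((Qc s q)⁻¹ ^ 2) := (commute_Qc s q).inv_right₀.pow_right 2
  calc FL s q * s - q * FL s q
      = -4 * ((s - star q) * s - q * (s - star q)) * (Qc s q)⁻¹ ^ 2 := by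
        rw [FL, mul_assoc _ (_ ^ 2), ← hc.eq]; noncomm_ring
    _ = -4 * (Qc s q)⁻¹ := by
        rw [sub_star_mul_sub_mul_sub_star_eq_Qc, mul_assoc, mul_inv_sq]

/-- for `s ∉ [q]`, `F_L(s,q) s − q F_L(s,q) = −4 Q_{c,s}(q)⁻¹`. -/
theorem FL_s_sub_q_FL (s q : ℍ[ℝ]) (h : ¬ inSphereOf s q) :
    FL s q * s - q * FL s q = -4 * (Qc s q)⁻¹ :=
  FL_s_sub_q_FL_general s q

end
end

section
/- Let s, q ∈ ℍ with s ∉ [q]. Then the conjugate Fueter operator applied in the variable q to the left slice hyperholomorphic Cauchy kernel satisfies: D̄ S_L^{-1}(s,q) = −F_L(s,q) s + q₀ F_L(s,q), i.e. D̄ S_L^{-1}(s,q) = Σ_{k=0}^{1} q₀^k F_L(s,q) (−1)^{k+1} s^{1−k}. -/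
noncomputable section

open scoped Quaternion
open Finset

/-! The differential of `S_L^{-1}(s, ·) = (s - q̄) Q⁻¹`, `Q = Q_{c,s}(q)`, in the direction `v` is
`-v̄ Q⁻¹ + 2 Re(v) (s - q̄) s Q⁻² - 2 Re(q v̄) (s - q̄) Q⁻²`: the differential
`2 Re(q v̄) - 2 Re(v) s` of `Q` lies in the real span of `1` and `s`, so it commutes with `Q`.
Pairing it with `D̄ = ∂₀ - e₁∂₁ - e₂∂₂ - e₃∂₃` gives
`D̄ S_L^{-1} = 2 Q⁻¹ + 2 (s - q̄) s Q⁻² - 2 q̄ (s - q̄) Q⁻²`, and the factorisation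
`Q = (s - q̄) s - q (s - q̄)` turns this into `4 (s - q̄) (s - q₀) Q⁻² = -F_L s + q₀ F_L`. -/

namespace Quaternion

instance instStarModule_s5 {R : Type*} [CommRing R] [StarRing R] [TrivialStar R] :
    StarModule R ℍ[R] where
  star_smul r a := by ext <;> simp [star_trivial]

lemma norm_sq_eq_re_sq_add_norm_im_sq (q : ℍ[ℝ]) : ‖q‖ ^ 2 = q.re ^ 2 + ‖q.im‖ ^ 2 := by
  simp only [sq, ← normSq_eq_norm_mul_self, normSq_def', re_im, imI_im, imJ_im, imK_im]
  ring

end Quaternion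

open Quaternion

@[simp] lemma re_e1 : e1.re = 0 := rfl
@[simp] lemma imI_e1 : e1.imI = 1 := rfl
@[simp] lemma imJ_e1 : e1.imJ = 0 := rfl
@[simp] lemma imK_e1 : e1.imK = 0 := rfl
@[simp] lemma re_e2 : e2.re = 0 := rfl
@[simp] lemma imI_e2 : e2.imI = 0 := rfl
@[simp] lemma imJ_e2 : e2.imJ = 1 := rfl
@[simp] lemma imK_e2 : e2.imK = 0 := rfl
@[simp] lemma re_e3 : e3.re = 0 := rfl
@[simp] lemma imI_e3 : e3.imI = 0 := rfl
@[simp] lemma imJ_e3 : e3.imJ = 0 := rfl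
@[simp] lemma imK_e3 : e3.imK = 1 := rfl

lemma star_e1 : star e1 = -e1 := by ext <;> simp
lemma star_e2 : star e2 = -e2 := by ext <;> simp
lemma star_e3 : star e3 = -e3 := by ext <;> simp
lemma e1_mul_e1 : e1 * e1 = -1 := by ext <;> simp
lemma e2_mul_e2 : e2 * e2 = -1 := by ext <;> simp
lemma e3_mul_e3 : e3 * e3 = -1 := by ext <;> simp

lemma star_eq_re_sub_smul_e (p : ℍ[ℝ]) :
    star p = p.re - p.imI • e1 - p.imJ • e2 - p.imK • e3 := by
  ext <;> simp

lemma Dbar_eq_of_fderiv_apply {f : ℍ[ℝ] → ℍ[ℝ]} {q p X Y Z : ℍ[ℝ]}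
    (hf : ∀ v, fderiv ℝ f q v = -(star v * X) + v.re • Y + (p * star v).re • Z) :
    Dbar f q = 2 * X + Y + star p * Z := by
  simp only [Dbar, hf, star_one, star_e1, star_e2, star_e3, re_e1, re_e2, re_e3, Quaternion.re_one,
    re_neg, mul_one, one_mul, mul_neg, neg_neg, one_smul, zero_smul, add_zero, mul_add, ← mul_assoc,
    e1_mul_e1, e2_mul_e2, e3_mul_e3, mul_smul_comm]
  rw [star_eq_re_sub_smul_e p]
  simp only [Quaternion.re_mul, re_e1, imI_e1, imJ_e1, imK_e1, re_e2, imI_e2, imJ_e2, imK_e2, re_e3,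
    imI_e3, imJ_e3, imK_e3, mul_zero, mul_one, sub_zero, zero_sub, neg_neg, two_mul, sub_mul,
    smul_mul_assoc, coe_mul_eq_smul]
  module

lemma Qc_eq_sub_re_sq_add (s q : ℍ[ℝ]) : Qc s q = (s - q.re) ^ 2 + ((‖q.im‖ ^ 2 : ℝ) : ℍ[ℝ]) := by
  rw [Qc, norm_sq_eq_re_sq_add_norm_im_sq, ← neg_sub (q.re : ℍ[ℝ]) s, neg_sq,
    (coe_commute q.re s).sub_sq]
  push_cast
  abel

lemma Qc_eq_sub_add_star (s p : ℍ[ℝ]) : Qc s p = s ^ 2 - (p + star p) * s + p * star p := by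
  rw [Qc, self_add_star', self_mul_star, normSq_eq_norm_mul_self, ← sq]
  push_cast
  rfl

lemma Qc_eq_sub_star_mul_sub (s q : ℍ[ℝ]) : Qc s q = (s - star q) * s - q * (s - star q) := by
  rw [Qc_eq_sub_add_star]
  noncomm_ring

lemma inSphereOf_of_Qc_eq_zero {s q : ℍ[ℝ]} (h : Qc s q = 0) : inSphereOf s q := by
  set t := s - q.re
  have ht : t ^ 2 = -((‖q.im‖ ^ 2 : ℝ) : ℍ[ℝ]) := by
    rw [Qc_eq_sub_re_sq_add] at h
    exact eq_neg_of_add_eq_zero_left h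
  have hnorm : ‖t‖ = ‖q.im‖ := by
    have := congrArg norm ht
    rw [norm_pow, norm_neg, norm_coe, Real.norm_of_nonneg (by positivity)] at this
    exact (sq_eq_sq₀ (norm_nonneg _) (norm_nonneg _)).1 this
  have hre : t.re = 0 := by
    rw [← sq_eq_neg_normSq, ht, normSq_eq_norm_mul_self, hnorm, sq]
  refine ⟨by simpa [t, sub_eq_zero] using hre, ?_⟩
  rw [← hnorm, ← re_add_im t, hre]
  simp [t]

lemma differentiable_Qc (s : ℍ[ℝ]) : Differentiable ℝ (Qc s) := by
  rw [funext (Qc_eq_sub_add_star s)]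
  fun_prop

lemma fderiv_Qc_apply (s q v : ℍ[ℝ]) :
    fderiv ℝ (Qc s) q v = (2 * (q * star v).re : ℝ) - (2 * v.re : ℝ) * s := by
  have hid := hasFDerivAt_id (𝕜 := ℝ) q
  have h : HasFDerivAt (fun p => s ^ 2 - (p + star p) * s + p * star p) _ q :=
    ((hasFDerivAt_const (s ^ 2) q).sub ((hid.add hid.star).mul_const' s)).add (hid.mul' hid.star)
  have hD : fderiv ℝ (Qc s) q v = q * star v + v * star q - (v + star v) * s := by
    rw [funext (Qc_eq_sub_add_star s), h.fderiv]
    simp only [ContinuousLinearMap.comp_id, smul_add, zero_sub, neg_add_rev, id_eq,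
      MulOpposite.op_star, add_apply, neg_apply, smul_apply, ContinuousLinearEquiv.coe_coe,
      starL'_apply, MulOpposite.smul_eq_mul_unop, MulOpposite.unop_op, ContinuousLinearMap.id_apply,
      smul_eq_mul, MulOpposite.unop_star, add_mul]
    abel
  have hvq : v * star q = star (q * star v) := by rw [star_mul, star_star]
  rw [hD, hvq, self_add_star', self_add_star']

lemma fderiv_SL_apply {s q : ℍ[ℝ]} (hc : Qc s q ≠ 0) (v : ℍ[ℝ]) :
    fderiv ℝ (SL s) q v = -(star v * (Qc s q)⁻¹)
      + v.re • ((2 : ℝ) • ((s - star q) * s * (Qc s q)⁻¹ ^ 2))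
      + (q * star v).re • ((-2 : ℝ) • ((s - star q) * (Qc s q)⁻¹ ^ 2)) := by
  have h : HasFDerivAt (SL s) _ q :=
    ((hasFDerivAt_const s q).sub (hasFDerivAt_id (𝕜 := ℝ) q).star).mul'
      ((hasFDerivAt_inv' hc).comp q (differentiable_Qc s q).hasFDerivAt)
  have hD : Commute (Qc s q)⁻¹ (fderiv ℝ (Qc s) q v) := by
    rw [fderiv_Qc_apply]
    exact (coe_commute _ _).symm.sub_right
      ((coe_commute _ _).symm.mul_right (commute_Qc_self s q).inv_left₀)
  rw [h.fderiv]
  simp only [id_eq, Pi.sub_apply, ContinuousLinearMap.neg_comp, smul_neg, MulOpposite.op_inv,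
    ContinuousLinearMap.comp_id, zero_sub, add_apply, neg_apply, smul_apply,
    ContinuousLinearMap.comp_apply, ContinuousLinearMap.mulLeftRight_apply, smul_eq_mul,
    ContinuousLinearEquiv.coe_coe, starL'_apply, MulOpposite.smul_eq_mul_unop,
    MulOpposite.unop_inv, MulOpposite.unop_op, neg_smul]
  rw [hD.eq, mul_assoc, ← sq, fderiv_Qc_apply]
  simp only [mul_sub, sub_mul, coe_mul_eq_smul, smul_mul_assoc, mul_smul_comm, mul_assoc]
  module

lemma two_mul_inv_Qc_add_eq_FL {s q : ℍ[ℝ]} (hc : Qc s q ≠ 0) :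
    2 * (Qc s q)⁻¹ + (2 : ℝ) • ((s - star q) * s * (Qc s q)⁻¹ ^ 2)
      + star q * ((-2 : ℝ) • ((s - star q) * (Qc s q)⁻¹ ^ 2)) = -(FL s q * s) + q.re • FL s q := by
  have hinv : (Qc s q)⁻¹ = Qc s q * (Qc s q)⁻¹ ^ 2 := by
    rw [sq, ← mul_assoc, mul_inv_cancel₀ hc, one_mul]
  have hcomm : Commute ((Qc s q)⁻¹ ^ 2) s := (commute_Qc_self s q).inv_left₀.pow_left 2
  rw [FL]
  generalize (Qc s q)⁻¹ ^ 2 = w at hinv hcomm ⊢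
  rw [hinv, Qc_eq_sub_star_mul_sub, mul_assoc _ w s, hcomm.eq]
  generalize s - star q = a
  rw [star_eq_two_re_sub q]
  simp only [mul_sub, sub_mul, coe_mul_eq_smul, mul_smul_comm, mul_assoc, neg_mul]
  simp only [← Nat.ofNat_nsmul_eq_mul]
  module

/-- for `s ∉ [q]`,
`D̄ S_L^{-1}(s,q) = −F_L(s,q) s + q₀ F_L(s,q) = Σ_{k=0}^{1} q₀^k F_L(s,q) (−1)^{k+1} s^{1−k}`. -/
theorem Dbar_SL (s q : ℍ[ℝ]) (h : ¬ inSphereOf s q) :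
    Dbar (fun p => SL s p) q = -(FL s q * s) + q.re • FL s q ∧
    Dbar (fun p => SL s p) q =
      ∑ k ∈ Finset.range 2, ((-1 : ℝ) ^ (k + 1) * q.re ^ k) • (FL s q * s ^ (1 - k)) := by
  have hc : Qc s q ≠ 0 := mt inSphereOf_of_Qc_eq_zero h
  have hDbar : Dbar (fun p => SL s p) q = -(FL s q * s) + q.re • FL s q :=
    (Dbar_eq_of_fderiv_apply (fderiv_SL_apply hc)).trans (two_mul_inv_Qc_add_eq_FL hc)
  refine ⟨hDbar, ?_⟩
  simp [Finset.sum_range_succ, hDbar]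
end
end

section
/- For every integer n ≥ 1 and every q ∈ ℍ, the conjugate Fueter operator applied to qⁿ satisfies: D̄(qⁿ) = −Δ(q^{n+1}) + q₀ Δ(qⁿ), where q₀ = Re(q) and Δ is the Laplacian in the four real variables q₀, q₁, q₂, q₃. -/
/-!
Both sides satisfy first-order recursions in `n`. The product rules for `p ↦ f p * p` and
`p ↦ p * f p`, together with `x + e₁xe₁ + e₂xe₂ + e₃xe₃ = -2x̄`, give
`D̄(qⁿ⁺¹) = D̄(qⁿ) q + 2(qⁿ + q̄ⁿ)`, `Δ(qⁿ⁺¹) = Δ(qⁿ) q + 2 (qⁿ)D` and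
`(qⁿ⁺¹)D = q (qⁿ)D - 2q̄ⁿ`, where `fD` is the right Fueter operator. Writing `q₀ = q - Im q`,
induction on `n` reduces the identity to `Im q · (qⁿ)D = q̄ⁿ - qⁿ`, which follows from the last
recursion by a second induction.
-/

noncomputable section

open scoped Quaternion
open Finset

section ProductRules

variable {𝕜 𝔸 : Type*} [NontriviallyNormedField 𝕜] [NormedRing 𝔸] [NormedAlgebra 𝕜 𝔸]
  {f : 𝔸 → 𝔸} {x : 𝔸}

theorem fderiv_mul_id_apply (hf : DifferentiableAt 𝕜 f x) (v : 𝔸) :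
    fderiv 𝕜 (fun y => f y * y) x v = fderiv 𝕜 f x v * x + f x * v := by
  have h := fderiv_fun_mul' hf differentiableAt_id
  simp only [id] at h
  simp [h, add_comm]

theorem fderiv_id_mul_apply (hf : DifferentiableAt 𝕜 f x) (v : 𝔸) :
    fderiv 𝕜 (fun y => y * f y) x v = v * f x + x * fderiv 𝕜 f x v := by
  have h := fderiv_fun_mul' differentiableAt_id hf
  simp only [id] at h
  simp [h, add_comm]

theorem fderiv_fderiv_mul_id_apply (hf : ContDiff 𝕜 2 f) (v : 𝔸) :
    fderiv 𝕜 (fun y => fderiv 𝕜 (fun z => f z * z) y v) x v =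
      fderiv 𝕜 (fun y => fderiv 𝕜 f y v) x v * x + 2 * (fderiv 𝕜 f x v * v) := by
  have hdf : Differentiable 𝕜 (fun y => fderiv 𝕜 f y v) :=
    ((hf.fderiv_right (m := 1) (by norm_num)).differentiable one_ne_zero).clm_apply
      (differentiable_const v)
  have hf' : Differentiable 𝕜 f := hf.differentiable two_ne_zero
  simp only [fderiv_mul_id_apply (hf' _)]
  rw [fderiv_fun_add (by fun_prop) (by fun_prop), add_apply,
    fderiv_mul_id_apply (hdf x), fderiv_mul_const' (hf' x)]
  simp [two_mul, add_assoc]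

end ProductRules

theorem sum_basis_mul_mul_basis (x : ℍ[ℝ]) :
    x + e1 * x * e1 + e2 * x * e2 + e3 * x * e3 = -2 * star x := by
  rw [neg_mul, two_mul]
  ext <;> simp [Quaternion.re_mul, Quaternion.imI_mul, Quaternion.imJ_mul, Quaternion.imK_mul]
    <;> simp [e1, e2, e3]

section FueterProductRules

variable {f : ℍ[ℝ] → ℍ[ℝ]} {q : ℍ[ℝ]}

theorem Dbar_mul_id (hf : DifferentiableAt ℝ f q) :
    Dbar (fun p => f p * p) q = Dbar f q * q + 2 * (f q + star (f q)) := by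
  have h := sum_basis_mul_mul_basis (f q)
  simp only [Dbar, fderiv_mul_id_apply hf]
  linear_combination (norm := noncomm_ring) -h

theorem DopR_id_mul (hf : DifferentiableAt ℝ f q) :
    DopR (fun p => p * f p) q = q * DopR f q - 2 * star (f q) := by
  have h := sum_basis_mul_mul_basis (f q)
  simp only [DopR, fderiv_id_mul_apply hf]
  linear_combination (norm := noncomm_ring) h

theorem Lap_mul_id (hf : ContDiff ℝ 2 f) :
    Lap (fun p => f p * p) q = Lap f q * q + 2 * DopR f q := by
  simp only [Lap, DopR, fderiv_fderiv_mul_id_apply hf]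
  noncomm_ring

end FueterProductRules

section Powers

variable (n : ℕ) (q : ℍ[ℝ])

theorem Dbar_pow_succ :
    Dbar (fun p => p ^ (n + 1)) q = Dbar (fun p => p ^ n) q * q + 2 * (q ^ n + star q ^ n) := by
  simp only [pow_succ, Dbar_mul_id (differentiableAt_pow n), star_pow]

theorem DopR_pow_succ :
    DopR (fun p => p ^ (n + 1)) q = q * DopR (fun p => p ^ n) q - 2 * star q ^ n := by
  simp only [pow_succ', DopR_id_mul (differentiableAt_pow n), star_pow]

theorem Lap_pow_succ :
    Lap (fun p => p ^ (n + 1)) q = Lap (fun p => p ^ n) q * q + 2 * DopR (fun p => p ^ n) q := by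
  simp only [pow_succ, Lap_mul_id (f := fun p => p ^ n) (by fun_prop)]

theorem im_mul_DopR_pow : q.im * DopR (fun p => p ^ n) q = star q ^ n - q ^ n := by
  induction n with
  | zero => simp [DopR]
  | succ n ih =>
    have hstar : star q = q - 2 * q.im := by ext <;> simp [two_mul]
    have hcomm : Commute q.im q := by
      simpa using (Quaternion.coe_commute q.re q.im).symm.add_right (Commute.refl q.im)
    rw [DopR_pow_succ, pow_succ', pow_succ']
    linear_combination (norm := noncomm_ring)
      q * ih + hcomm.eq * DopR (fun p => p ^ n) q - hstar * star q ^ n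

end Powers

theorem Dbar_pow_eq_lap_general (n : ℕ) (q : ℍ[ℝ]) :
    Dbar (fun p => p ^ n) q =
      -Lap (fun p => p ^ (n + 1)) q + q.re • Lap (fun p => p ^ n) q := by
  induction n with
  | zero => simp [Dbar, Lap]
  | succ n ih =>
    have hre : (q.re : ℍ[ℝ]) = q - q.im := by simp
    rw [Dbar_pow_succ, ih, Lap_pow_succ (n + 1), Lap_pow_succ n, DopR_pow_succ,
      ← Quaternion.coe_mul_eq_smul, ← Quaternion.coe_mul_eq_smul, hre]
    linear_combination (norm := noncomm_ring) 2 * im_mul_DopR_pow n q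

/-- for `n ≥ 1`, `D̄(qⁿ) = −Δ(q^{n+1}) + q₀ Δ(qⁿ)`. -/
theorem Dbar_pow_eq_lap (n : ℕ) (hn : 1 ≤ n) (q : ℍ[ℝ]) :
    Dbar (fun p => p ^ n) q =
      -Lap (fun p => p ^ (n + 1)) q + q.re • Lap (fun p => p ^ n) q :=
  Dbar_pow_eq_lap_general n q

end
end

section
/- Let s, q ∈ ℍ with |q| < |s| (so in particular s ∉ [q] and F_R(s,q) is defined). Then Σ_{k=0}^{1} s^{1−k} (−1)^{k+1} F_R(s,q) q₀^k = 2 Σ_{n=1}^{∞} s^{−1−n} ( n q^{n−1} + Σ_{j=1}^{n} q^{n−j} q̄^{j−1} ), i.e. −s F_R(s,q) + q₀ F_R(s,q) equals the right D̄-kernel series. -/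
noncomputable section

open scoped Quaternion
open Finset

section RDKaux

/-- auxiliary polynomial `P n = ∑_{i=0}^n q^{n-i} (star q)^i`. -/
private def RPq (q : ℍ[ℝ]) : ℕ → ℍ[ℝ] := fun n => ∑ i ∈ Finset.range (n+1), q^(n-i) * (star q)^i

private def RPm (q : ℍ[ℝ]) : ℕ → ℍ[ℝ]
  | 0 => 0
  | n+1 => RPq q n

private lemma RPq_zero (q : ℍ[ℝ]) : RPq q 0 = 1 := by simp [RPq]

private lemma RPq_succ (q : ℍ[ℝ]) (n : ℕ) :
    RPq q (n+1) = q * RPq q n + (star q)^(n+1) := by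
  unfold RPq
  rw [Finset.sum_range_succ, Finset.mul_sum]
  congr 1
  · refine Finset.sum_congr rfl fun i hi => ?_
    have hin : i ≤ n := Nat.lt_succ_iff.mp (Finset.mem_range.mp hi)
    rw [show n+1-i = (n-i)+1 by omega, pow_succ', mul_assoc]
  · simp

private lemma RPq_norm_le (q : ℍ[ℝ]) (n : ℕ) : ‖RPq q n‖ ≤ ((n:ℝ)+1) * ‖q‖^n := by
  calc ‖RPq q n‖ ≤ ∑ i ∈ Finset.range (n+1), ‖q^(n-i) * (star q)^i‖ := norm_sum_le _ _
  _ = ∑ _i ∈ Finset.range (n+1), ‖q‖^n := by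
      refine Finset.sum_congr rfl fun i hi => ?_
      have hin : i ≤ n := Nat.lt_succ_iff.mp (Finset.mem_range.mp hi)
      rw [norm_mul, norm_pow, norm_pow, norm_star, ← pow_add, Nat.sub_add_cancel hin]
  _ = ((n:ℝ)+1) * ‖q‖^n := by
      rw [Finset.sum_const, Finset.card_range, nsmul_eq_mul]
      push_cast; ring

private lemma summable_norm_sub_succ {v : ℕ → ℍ[ℝ]} (hv : Summable fun n => ‖v n‖) :
    Summable fun n => ‖v n - v (n+1)‖ :=
  Summable.of_nonneg_of_le (fun _ => norm_nonneg _) (fun n => norm_sub_le _ _)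
    (hv.add ((summable_nat_add_iff 1).2 hv))

private lemma hasSum_telescope_q {v : ℕ → ℍ[ℝ]} (hv : Summable fun n => ‖v n‖) :
    HasSum (fun n => v n - v (n+1)) (v 0) := by
  have hsv : Summable v := Summable.of_norm hv
  have h0 : Filter.Tendsto v Filter.atTop (nhds 0) := hsv.tendsto_atTop_zero
  rw [hasSum_iff_tendsto_nat_of_summable_norm (summable_norm_sub_succ hv)]
  have heq : ∀ N, ∑ i ∈ Finset.range N, (v i - v (i+1)) = v 0 - v N :=
    fun N => Finset.sum_range_sub' v N
  simp only [heq]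
  simpa using Filter.Tendsto.sub (tendsto_const_nhds (x := v 0)) h0

private lemma summable_norm_aux {f : ℕ → ℍ[ℝ]} {ρ C : ℝ} (hρ0 : 0 ≤ ρ) (hρ1 : ρ < 1)
    (hC : ∀ n, ‖f n‖ ≤ C * (((n:ℝ)+1) * ρ^n)) : Summable fun n => ‖f n‖ := by
  have h1 : Summable (fun n : ℕ => (n:ℝ)^1 * ρ^n) :=
    summable_pow_mul_geometric_of_norm_lt_one 1 (by rwa [Real.norm_eq_abs, abs_of_nonneg hρ0])
  have h2 : Summable (fun n : ℕ => ρ^n) := summable_geometric_of_lt_one hρ0 hρ1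
  have master : Summable (fun n : ℕ => ((n:ℝ)+1) * ρ^n) := (h1.add h2).congr fun n => by ring
  exact Summable.of_nonneg_of_le (fun _ => norm_nonneg _) hC (master.mul_left C)

end RDKaux

set_option maxHeartbeats 3000000

/-- for `|q| < |s|`,
`Σ_{k=0}^{1} s^{1−k} (−1)^{k+1} F_R(s,q) q₀^k`, i.e. `−s F_R(s,q) + q₀F_R(s,q)`,
equals the right `D̄`-kernel series
`2 Σ_{n=1}^{∞} s^{−1−n} (n q^{n−1} + Σ_{j=1}^{n} q^{n−j} q̄^{j−1})`. -/
theorem right_Dbar_kernel_series (s q : ℍ[ℝ]) (h : ‖q‖ < ‖s‖) :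
    HasSum (fun n : ℕ =>
        (2 : ℍ[ℝ]) * (s⁻¹) ^ (n + 2) * (((n + 1 : ℕ) : ℍ[ℝ]) * q ^ n
            + ∑ j ∈ Finset.Icc 1 (n + 1), q ^ (n + 1 - j) * (star q) ^ (j - 1)))
      (∑ k ∈ Finset.range 2, ((-1 : ℝ) ^ (k + 1) * q.re ^ k) • (s ^ (1 - k) * FR s q)) ∧
    ∑ k ∈ Finset.range 2, ((-1 : ℝ) ^ (k + 1) * q.re ^ k) • (s ^ (1 - k) * FR s q)
      = -(s * FR s q) + q.re • FR s q := by
  have hs : s ≠ 0 := by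
    intro h0
    rw [h0, norm_zero] at h
    exact absurd (h.trans_le (norm_nonneg q)) (lt_irrefl _)
  have hEq : (∑ k ∈ Finset.range 2, ((-1 : ℝ) ^ (k + 1) * q.re ^ k) • (s ^ (1 - k) * FR s q))
      = -(s * FR s q) + q.re • FR s q := by
    norm_num [Finset.sum_range_succ]
  set r : ℍ[ℝ] := s⁻¹ with hrdef
  set Q : ℍ[ℝ] := Qc s q with hQdef
  set d : ℍ[ℝ] := s - star q with hddef
  set ρ : ℝ := ‖q‖ * ‖r‖ with hρdef
  have hρ0 : (0:ℝ) ≤ ρ := mul_nonneg (norm_nonneg _) (norm_nonneg _)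
  have hsn : (0:ℝ) < ‖s‖ := norm_pos_iff.mpr hs
  have hρ1 : ρ < 1 := by
    rw [hρdef, hrdef, norm_inv, ← div_eq_mul_inv]
    exact (div_lt_one hsn).mpr h
  have hone : ∀ n : ℕ, (ρ:ℝ)^n ≤ ((n:ℝ)+1)*ρ^n := fun n =>
    le_mul_of_one_le_left (pow_nonneg hρ0 n)
      (by have := Nat.cast_nonneg (α := ℝ) n; linarith)
  have hrs : ∀ X : ℍ[ℝ], r * (s * X) = X := fun X => by
    rw [← mul_assoc, hrdef, inv_mul_cancel₀ hs, one_mul]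
  have hsr : ∀ X : ℍ[ℝ], s * (r * X) = X := fun X => by
    rw [← mul_assoc, hrdef, mul_inv_cancel₀ hs, one_mul]
  -- scalar helpers
  have hcoes : ∀ x : ℝ, (x : ℍ[ℝ]) = x • (1:ℍ[ℝ]) := fun x => by
    rw [← Quaternion.coe_mul_eq_smul, mul_one]
  have h2q : ∀ X : ℍ[ℝ], (2*q.re) • X = q * X + star q * X := fun X => by
    rw [← add_mul, Quaternion.self_add_star', Quaternion.coe_mul_eq_smul]
  have hcq : ∀ X : ℍ[ℝ], star q * (q * X) = (‖q‖^2) • X := fun X => by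
    rw [← mul_assoc, Quaternion.star_mul_self,
      show (Quaternion.normSq q : ℝ) = ‖q‖^2 by rw [Quaternion.normSq_eq_norm_mul_self, sq],
      Quaternion.coe_mul_eq_smul]
  have hstar : star q = (2*q.re) • (1:ℍ[ℝ]) - q := by
    rw [← hcoes, ← Quaternion.self_add_star' q]; abel
  have hqq : q * q = (2*q.re) • q - (‖q‖^2) • (1:ℍ[ℝ]) := by
    have h1 : star q * (q * 1) = (‖q‖^2) • (1:ℍ[ℝ]) := hcq 1
    rw [mul_one] at h1
    rw [← h1, hstar, sub_mul, smul_mul_assoc, one_mul]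
    abel
  have hQs' : Q = s^2 - (2*q.re) • s + (‖q‖^2) • (1:ℍ[ℝ]) := by
    rw [hQdef]
    show s ^ 2 - 2 * (q.re : ℍ[ℝ]) * s + ((‖q‖ ^ 2 : ℝ) : ℍ[ℝ]) = _
    rw [hcoes (‖q‖^2:ℝ),
      show ((2:ℍ[ℝ]) * (q.re:ℍ[ℝ])) = (((2*q.re : ℝ)):ℍ[ℝ]) by push_cast; ring_nf; rfl,
      Quaternion.coe_mul_eq_smul]
  have hQsc : Q * s = s * Q := by
    rw [hQs']
    simp only [sub_mul, add_mul, mul_sub, mul_add, smul_mul_assoc, mul_smul_comm, one_mul,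
      mul_one]
    rw [show s^2*s = s*s^2 by rw [← pow_succ, ← pow_succ']]
  have hQsX : ∀ X, Q * (s * X) = s * (Q * X) := fun X => by
    rw [← mul_assoc, hQsc, mul_assoc]
  have hQskX : ∀ (k:ℕ) (X : ℍ[ℝ]), s^k * (Q * X) = Q * (s^k * X) := by
    intro k
    induction k with
    | zero => intro X; simp
    | succ m ih =>
      intro X
      rw [pow_succ', mul_assoc, mul_assoc, ih X, hQsX]
  have hcan0 : ∀ (j:ℕ) (X : ℍ[ℝ]), s^j * (r^j * X) = X := by
    intro j
    induction j with
    | zero => intro X; simp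
    | succ m ih =>
      intro X
      rw [pow_succ (s) m, pow_succ' (r) m, mul_assoc, mul_assoc, hsr, ih]
  have hcan1 : ∀ (j:ℕ) (X : ℍ[ℝ]), s^(j+1) * (r^j * X) = s * X := by
    intro j X
    rw [pow_succ' s j, mul_assoc, hcan0]
  have hcan1' : ∀ (j:ℕ) (X : ℍ[ℝ]), s^(j+2) * (r^(j+1) * X) = s * X := by
    intro j X
    rw [pow_add s j 2, pow_mul_comm, pow_succ r j, mul_assoc (r^j) r X,
      mul_assoc (s^2) (s^j), hcan0, sq, mul_assoc, hsr]
  have hcan2 : ∀ (j:ℕ) (X : ℍ[ℝ]), s^(j+2) * (r^j * X) = s * (s * X) := by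
    intro j X
    rw [pow_add s j 2, pow_mul_comm, mul_assoc, hcan0, sq, mul_assoc]
  have key1 : ∀ x : ℍ[ℝ], Q * x = s * (d * x) - d * (q * x) := by
    intro x
    have hx : q*(q*x) = (2*q.re) • (q*x) - (‖q‖^2) • x := by
      rw [← mul_assoc, hqq, sub_mul, smul_mul_assoc, smul_mul_assoc, one_mul]
    rw [hQs', hddef, hstar]
    simp only [sub_mul, add_mul, mul_sub, mul_add, smul_mul_assoc, mul_smul_comm, one_mul,
      mul_one, smul_sub, smul_smul, sq, mul_assoc, hx]
    module
  have hPmrec : ∀ n, RPq q (n+1) = (2*q.re) • RPq q n - (‖q‖^2) • RPm q n := by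
    intro n
    cases n with
    | zero =>
      show RPq q 1 = (2*q.re) • RPq q 0 - (‖q‖^2) • (0:ℍ[ℝ])
      rw [RPq_zero, smul_zero, sub_zero, h2q, RPq_succ q 0, RPq_zero]
      simp
    | succ m =>
      show RPq q (m+2) = (2*q.re) • RPq q (m+1) - (‖q‖^2) • RPq q m
      rw [RPq_succ q (m+1), RPq_succ q m, h2q]
      have e1 : (‖q‖^2:ℝ) • RPq q m = star q * (q * RPq q m) := (hcq _).symm
      rw [e1, pow_succ' (star q) (m+1)]
      simp only [mul_add]
      abel
  have hb1 : Summable (fun n => ‖r^(n+1) * q^n‖) := by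
    refine summable_norm_aux hρ0 hρ1 (C := ‖r‖) (fun n => ?_)
    rw [norm_mul, norm_pow, norm_pow]
    have e : ‖r‖^(n+1)*‖q‖^n = ‖r‖ * ρ^n := by rw [hρdef, mul_pow, pow_succ']; ring
    rw [e]
    exact mul_le_mul_of_nonneg_left (hone n) (norm_nonneg r)
  obtain ⟨K, hK⟩ := Summable.of_norm hb1
  have hv1 : Summable (fun n => ‖r^n * (d * q^n)‖) := by
    refine summable_norm_aux hρ0 hρ1 (C := ‖d‖) (fun n => ?_)
    rw [norm_mul, norm_pow, norm_mul, norm_pow]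
    have e : ‖r‖^n*(‖d‖*‖q‖^n) = ‖d‖ * ρ^n := by rw [hρdef, mul_pow]; ring
    rw [e]
    exact mul_le_mul_of_nonneg_left (hone n) (norm_nonneg d)
  have htel1 : HasSum (fun n => Q * (r^(n+1) * q^n)) d := by
    have h0 := hasSum_telescope_q hv1
    have h1 : (fun n => Q * (r^(n+1)*q^n))
        = (fun n => r^n*(d*q^n) - r^(n+1)*(d*q^(n+1))) := by
      funext n
      apply mul_left_cancel₀ (pow_ne_zero (n+1) hs)
      rw [hQskX (n+1), hcan0 (n+1), mul_sub, hcan1 n, hcan0 (n+1), pow_succ' q n]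
      exact key1 (q^n)
    rw [h1]
    simpa using h0
  have hQK : Q * K = d := (hK.mul_left Q).unique htel1
  have hb2 : Summable (fun n => ‖r^(n+2) * RPq q n‖) := by
    refine summable_norm_aux hρ0 hρ1 (C := ‖r‖^2) (fun n => ?_)
    rw [norm_mul, norm_pow]
    calc ‖r‖^(n+2) * ‖RPq q n‖ ≤ ‖r‖^(n+2) * (((n:ℝ)+1)*‖q‖^n) :=
        mul_le_mul_of_nonneg_left (RPq_norm_le q n) (by positivity)
      _ = ‖r‖^2 * (((n:ℝ)+1)*ρ^n) := by rw [hρdef, mul_pow, pow_add]; ring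
  obtain ⟨K2, hK2⟩ := Summable.of_norm hb2
  have hwx : Summable (fun n => ‖r^n * RPq q n‖) := by
    refine summable_norm_aux hρ0 hρ1 (C := 1) (fun n => ?_)
    rw [norm_mul, norm_pow, one_mul]
    calc ‖r‖^n * ‖RPq q n‖ ≤ ‖r‖^n * (((n:ℝ)+1)*‖q‖^n) :=
        mul_le_mul_of_nonneg_left (RPq_norm_le q n) (by positivity)
      _ = ((n:ℝ)+1)*ρ^n := by rw [hρdef, mul_pow]; ring
  have hwy : Summable (fun n => ‖(‖q‖^2:ℝ) • (r^(n+1) * RPm q n)‖) := by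
    rw [← summable_nat_add_iff 1]
    refine summable_norm_aux hρ0 hρ1 (C := ‖q‖^2*‖r‖^2) (fun n => ?_)
    show ‖(‖q‖^2:ℝ) • (r^(n+1+1) * RPm q (n+1))‖ ≤ _
    rw [show RPm q (n+1) = RPq q n from rfl]
    simp only [norm_smul, norm_mul, norm_pow, Real.norm_eq_abs, abs_pow, abs_norm]
    calc ‖q‖^2 * (‖r‖^(n+1+1) * ‖RPq q n‖)
        ≤ ‖q‖^2*(‖r‖^(n+1+1) * (((n:ℝ)+1)*‖q‖^n)) := by
          refine mul_le_mul_of_nonneg_left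
            (mul_le_mul_of_nonneg_left (RPq_norm_le q n) (by positivity)) (by positivity)
      _ = (‖q‖^2*‖r‖^2) * (((n:ℝ)+1)*ρ^n) := by
          rw [hρdef, mul_pow, show n+1+1 = n+2 from rfl, pow_add]; ring
  have hw : Summable (fun n => ‖r^n * RPq q n - (‖q‖^2:ℝ) • (r^(n+1) * RPm q n)‖) :=
    Summable.of_nonneg_of_le (fun _ => norm_nonneg _) (fun n => norm_sub_le _ _) (hwx.add hwy)
  have htel2 : HasSum (fun n => Q * (r^(n+2) * RPq q n)) 1 := by
    have h0 := hasSum_telescope_q hw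
    have h1 : (fun n => Q * (r^(n+2) * RPq q n))
        = fun n => (r^n * RPq q n - (‖q‖^2:ℝ) • (r^(n+1) * RPm q n))
            - (r^(n+1) * RPq q (n+1) - (‖q‖^2:ℝ) • (r^(n+1+1) * RPm q (n+1))) := by
      funext n
      apply mul_left_cancel₀ (pow_ne_zero (n+2) hs)
      rw [hQskX (n+2), hcan0 (n+2)]
      simp only [mul_sub, mul_smul_comm, show n+1+1 = n+2 from rfl,
        show RPm q (n+1) = RPq q n from rfl]
      rw [hcan2 n, hcan1' n, hcan1' n, hcan0 (n+2), hPmrec n, hQs']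
      simp only [sub_mul, add_mul, smul_mul_assoc, one_mul, mul_sub, mul_smul_comm, sq,
        mul_assoc]
      module
    rw [h1]
    simpa [RPq_zero, RPm] using h0
  have hQK2 : Q * K2 = 1 := (hK2.mul_left Q).unique htel2
  have hQne : Q ≠ 0 := by
    intro h0
    rw [h0, zero_mul] at hQK2
    exact zero_ne_one hQK2
  have hb3 : Summable (fun n : ℕ => ‖((n:ℝ)+1) • (r^(n+2) * q^n)‖) := by
    refine summable_norm_aux hρ0 hρ1 (C := ‖r‖^2) (fun n => ?_)
    simp only [norm_smul, norm_mul, norm_pow, Real.norm_eq_abs]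
    rw [abs_of_nonneg (by positivity : (0:ℝ) ≤ (n:ℝ)+1)]
    refine le_of_eq ?_
    rw [hρdef, mul_pow, pow_add]; ring
  obtain ⟨K3, hK3⟩ := Summable.of_norm hb3
  have hv3 : Summable (fun n : ℕ => ‖((n:ℝ)+1) • (r^(n+1) * (d * q^n))‖) := by
    refine summable_norm_aux hρ0 hρ1 (C := ‖r‖*‖d‖) (fun n => ?_)
    simp only [norm_smul, norm_mul, norm_pow, Real.norm_eq_abs]
    rw [abs_of_nonneg (by positivity : (0:ℝ) ≤ (n:ℝ)+1)]
    refine le_of_eq ?_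
    rw [hρdef, mul_pow, pow_succ']; ring
  have htel3 : HasSum (fun n : ℕ => Q * (((n:ℝ)+1) • (r^(n+2) * q^n)))
      (r*d + K*q - (‖q‖^2:ℝ) • (r*K)) := by
    have t1 := hasSum_telescope_q hv3
    have t2 := hK.mul_right q
    have t3 := hK.mul_left ((‖q‖^2:ℝ) • r)
    have t4 := (t1.add t2).sub t3
    have h1 : (fun n : ℕ => (((n:ℝ)+1) • (r^(n+1) * (d * q^n))
          - (((n+1:ℕ):ℝ)+1) • (r^(n+1+1) * (d * q^(n+1)))
          + r^(n+1) * q^n * q) - (‖q‖^2:ℝ) • r * (r^(n+1) * q^n))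
        = fun n : ℕ => Q * (((n:ℝ)+1) • (r^(n+2) * q^n)) := by
      funext n
      apply mul_left_cancel₀ (pow_ne_zero (n+2) hs)
      have e4 : (‖q‖^2:ℝ) • r * (r^(n+1) * q^n) = (‖q‖^2:ℝ) • (r^(n+2) * q^n) := by
        rw [smul_mul_assoc, ← mul_assoc, ← pow_succ']
      have e3 : r^(n+1) * q^n * q = r^(n+1) * (q * q^n) := by
        rw [mul_assoc, ← pow_succ, pow_succ' q n]
      rw [e4, e3]
      simp only [mul_sub, mul_add, mul_smul_comm, show n+1+1 = n+2 from rfl]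
      rw [hcan1' n, hcan0 (n+2), hcan1' n, hcan0 (n+2), hQskX (n+2), hcan0 (n+2), key1 (q^n),
        pow_succ' q n, hddef]
      simp only [sub_mul, mul_sub, smul_sub, hcq]
      push_cast
      module
    rw [h1] at t4
    simpa [smul_mul_assoc] using t4
  have hQK3 : Q * K3 = r*d + K*q - (‖q‖^2:ℝ) • (r*K) := (hK3.mul_left Q).unique htel3
  -- reindex the inner sum
  have hIcc : ∀ n:ℕ, (∑ j ∈ Finset.Icc 1 (n+1), q^(n+1-j)*(star q)^(j-1)) = RPq q n := by
    intro n
    rw [← Finset.Ico_add_one_right_eq_Icc, Finset.sum_Ico_eq_sum_range]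
    simp only [show n+1+1-1 = n+1 from rfl]
    unfold RPq
    refine Finset.sum_congr rfl fun i hi => ?_
    rw [show n+1-(1+i) = n-i from by omega, show 1+i-1 = i from by omega]
  have hg1g2 := (hK3.add hK2).mul_left 2
  have hFn : (fun n : ℕ => (2:ℍ[ℝ]) * r^(n+2) * (((n+1:ℕ):ℍ[ℝ])*q^n
        + ∑ j ∈ Finset.Icc 1 (n+1), q^(n+1-j)*(star q)^(j-1)))
      = fun n : ℕ => 2*((((n:ℝ)+1) • (r^(n+2)*q^n)) + r^(n+2) * RPq q n) := by
    funext n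
    rw [hIcc n, show ((n+1:ℕ):ℍ[ℝ]) = ((((n:ℝ)+1:ℝ)):ℍ[ℝ]) from by push_cast; rfl,
      Quaternion.coe_mul_eq_smul]
    rw [mul_assoc, mul_add, mul_smul_comm]
  -- final algebraic identification of the sum
  have hK2inv : Q⁻¹ = K2 := inv_eq_of_mul_eq_one_right hQK2
  have hFR : FR s q = -(4*(K2*(K2*d))) := by
    show -4 * ((Qc s q)⁻¹)^2 * (s - star q) = _
    rw [← hQdef, ← hddef, hK2inv, sq, neg_mul, neg_mul, mul_assoc, mul_assoc]
  have h2X : ∀ X Y : ℍ[ℝ], X * (2*Y) = 2*(X*Y) := fun X Y => by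
    rw [two_mul, mul_add, two_mul]
  have h4X : ∀ X Y : ℍ[ℝ], X * (4*Y) = 4*(X*Y) := fun X Y => by
    rw [show (4:ℍ[ℝ]) = 2+2 from by norm_num, add_mul, mul_add, h2X, ← add_mul]
  have hA : Q * (2*(K3+K2)) = 2*(Q*K3) + 2*(Q*K2) := by rw [h2X, mul_add, mul_add]
  have hB : s * (Q*(2*(K3+K2))) = 2*d + 2*(s*(K*q)) - 2*((‖q‖^2:ℝ)•K) + 2*s := by
    rw [hA, hQK3, hQK2, mul_one, mul_add, h2X,
      show s*(2:ℍ[ℝ]) = 2*s from by rw [two_mul, mul_two],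
      mul_sub, mul_add, hsr, mul_smul_comm, hsr, mul_sub (2:ℍ[ℝ]), mul_add (2:ℍ[ℝ])]
  have hC : Q * (s*(Q*(2*(K3+K2)))) = 2*(Q*d) + 2*(s*(d*q)) - 2*((‖q‖^2:ℝ)•d) + 2*(Q*s) := by
    rw [hB, mul_add, mul_sub, mul_add, h2X, h2X, h2X, h2X, hQsX, ← mul_assoc Q K q, hQK,
      mul_smul_comm, hQK]
  have hD : Q * (FR s q) = -(4*(K2*d)) := by
    rw [hFR, mul_neg, h4X, ← mul_assoc Q K2, hQK2, one_mul]
  have hE : Q * (-(s*FR s q) + q.re•FR s q) = 4*(s*(K2*d)) - q.re•(4*(K2*d)) := by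
    rw [mul_add, mul_neg, hQsX, hD, mul_neg, neg_neg, mul_smul_comm, hD, smul_neg,
      ← sub_eq_add_neg, h4X]
  have hF2 : s * (Q * (-(s*FR s q) + q.re•FR s q))
      = 4*(s*(s*(K2*d))) - q.re•(4*(s*(K2*d))) := by
    rw [hE, mul_sub, h4X, mul_smul_comm, h4X]
  have hG : Q * (s * (Q * (-(s*FR s q) + q.re•FR s q))) = 4*(s*(s*d)) - q.re•(4*(s*d)) := by
    rw [hF2, mul_sub, h4X, hQsX, hQsX, ← mul_assoc Q K2 d, hQK2, one_mul,
      mul_smul_comm, h4X, hQsX, ← mul_assoc Q K2 d, hQK2, one_mul]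
  have h2s : ∀ Y:ℍ[ℝ], (2:ℍ[ℝ])*Y = (2:ℝ)•Y := fun Y => by
    rw [show (2:ℍ[ℝ]) = ((2:ℝ):ℍ[ℝ]) from by norm_cast, Quaternion.coe_mul_eq_smul]
  have h4s : ∀ Y:ℍ[ℝ], (4:ℍ[ℝ])*Y = (4:ℝ)•Y := fun Y => by
    rw [show (4:ℍ[ℝ]) = ((4:ℝ):ℍ[ℝ]) from by norm_cast, Quaternion.coe_mul_eq_smul]
  have hid : 2*(Q*d) + 2*(s*(d*q)) - 2*((‖q‖^2:ℝ)•d) + 2*(Q*s)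
      = 4*(s*(s*d)) - q.re•(4*(s*d)) := by
    rw [hQs', hddef, hstar]
    simp only [h2s, h4s, sub_mul, add_mul, mul_sub, mul_add, smul_mul_assoc, mul_smul_comm,
      smul_sub, smul_add, smul_smul, one_mul, mul_one, sq, mul_assoc, hqq]
    module
  have hval : 2*(K3+K2) = -(s*FR s q) + q.re•FR s q := by
    have hkey : Q*(s*(Q*(2*(K3+K2)))) = Q*(s*(Q*(-(s*FR s q) + q.re•FR s q))) := by
      rw [hC, hG]; exact hid
    exact mul_left_cancel₀ hQne (mul_left_cancel₀ hs (mul_left_cancel₀ hQne hkey))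
  refine ⟨?_, hEq⟩
  rw [hEq, ← hval, hFn]
  exact hg1g2
end
end
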